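/- For every finite undirected graph H = ⟨U, D⟩, define the instance G_H of the maximal spoiled-free problem as follows: V₂ = {v_ε : v ∈ U, ε ∈ {r, g, b, p, q}}, V₃ = {v'_ε : v ∈ U, ε ∈ {r, g, b, p, q}}, and each triangle has its own unique V₁-vertex (every V₁-vertex belongs to exactly one triangle), so a triangle is specified by its V₂-vertex, its V₃-vertex, and whether its V₁-vertex is spoiled. The nonspoiled triangles are, for each v ∈ U, those with (V₂, V₃)-pairs (v_r, v'_p), (v_g, v'_p), (v_g, v'_q), (v_b, v'_q), (v_p, v'_r), (v_p, v'_g), (v_q, v'_g), (v_q, v'_b). The spoiled triangles are those with pairs (v_ε, v'_δ) for each v ∈ U and each ε ≠ δ with ε, δ ∈ {r, g, b}, and those with pairs (v_ε, u'_ε) for each ε ∈ {r, g, b} and each pair v, u ∈ U with {v, u} ∈ D. Then H is 3-colorable if and only if G_H has the maximal spoiled-free property. -/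
import Mathlib


/-- The five labels `r, g, b, p, q` used to build the instance `G_H`. -/
inductive L5 : Type
  | r | g | b | p | q
deriving DecidableEq

/-- `T` is a set of disjoint triangles: no two distinct triangles of `T` agree on the
first, the second, or the third coordinate. -/
def IsDisjTriangles {α β γ : Type*} (T : Set (α × β × γ)) : Prop :=
  ∀ t ∈ T, ∀ t' ∈ T, (t.1 = t'.1 ∨ t.2.1 = t'.2.1 ∨ t.2.2 = t'.2.2) → t = t'

/-- The instance `⟨V₁, V₂, V₃, S, E⟩` of the maximal spoiled-free problem has the
maximal spoiled-free property: there is a set `T ⊆ E` of disjoint triangles, maximal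
under inclusion among sets of disjoint triangles contained in `E`, none of whose
triangles is spoiled (has its `V₁`-vertex in `S`). -/
def MaxSpoiledFree {α β γ : Type*} (S : Set α) (E : Set (α × β × γ)) : Prop :=
  ∃ T ⊆ E, IsDisjTriangles T ∧
    (∀ T' ⊆ E, IsDisjTriangles T' → T ⊆ T' → T' = T) ∧
    ∀ t ∈ T, t.1 ∉ S

/-- The nonspoiled `(V₂, V₃)`-pairs of `G_H`: for each `v`,
`(v_r, v'_p), (v_g, v'_p), (v_g, v'_q), (v_b, v'_q), (v_p, v'_r), (v_p, v'_g),
(v_q, v'_g), (v_q, v'_b)`. -/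
def nonSpoiledPairs (U : Type*) : Set ((U × L5) × U × L5) :=
  {x | ∃ v : U,
    x = ((v, L5.r), (v, L5.p)) ∨ x = ((v, L5.g), (v, L5.p)) ∨
    x = ((v, L5.g), (v, L5.q)) ∨ x = ((v, L5.b), (v, L5.q)) ∨
    x = ((v, L5.p), (v, L5.r)) ∨ x = ((v, L5.p), (v, L5.g)) ∨
    x = ((v, L5.q), (v, L5.g)) ∨ x = ((v, L5.q), (v, L5.b))}

/-- The spoiled `(V₂, V₃)`-pairs of `G_H`: `(v_ε, v'_δ)` for `ε ≠ δ`, `ε, δ ∈ {r,g,b}`,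
and `(v_ε, u'_ε)` for `ε ∈ {r,g,b}` and `{v, u}` an edge of `H`. -/
def spoiledPairs {U : Type*} (H : SimpleGraph U) : Set ((U × L5) × U × L5) :=
  {x | (∃ (v : U) (ε δ : L5), ε ∈ ({L5.r, L5.g, L5.b} : Set L5) ∧
          δ ∈ ({L5.r, L5.g, L5.b} : Set L5) ∧ ε ≠ δ ∧ x = ((v, ε), (v, δ))) ∨
       (∃ (v u : U) (ε : L5), ε ∈ ({L5.r, L5.g, L5.b} : Set L5) ∧ H.Adj v u ∧
          x = ((v, ε), (u, ε)))}

/-- The set of triangles of `G_H`, each given by its `(V₂, V₃)`-pair together with a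
Boolean flag telling whether its (unique, private) `V₁`-vertex is spoiled. -/
def triSet {U : Type*} (H : SimpleGraph U) : Set (((U × L5) × U × L5) × Bool) :=
  {t | (t.2 = false ∧ t.1 ∈ nonSpoiledPairs U) ∨ (t.2 = true ∧ t.1 ∈ spoiledPairs H)}

/-- The triangle relation `E` of `G_H`: each triangle's `V₁`-vertex is the triangle
itself (every `V₁`-vertex belongs to exactly one triangle), its `V₂`-vertex is the first
component of its pair and its `V₃`-vertex the second. -/
def triE {U : Type*} (H : SimpleGraph U) :
    Set (((((U × L5) × U × L5) × Bool)) × (U × L5) × (U × L5)) :=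
  {x | x.1 ∈ triSet H ∧ x.2.1 = x.1.1.1 ∧ x.2.2 = x.1.1.2}

/-- The set of spoiled `V₁`-vertices of `G_H`. -/
def triS {U : Type*} (H : SimpleGraph U) : Set (((U × L5) × U × L5) × Bool) :=
  {t | t ∈ triSet H ∧ t.2 = true}

namespace Stmt7

instance : Fintype L5 :=
  ⟨{L5.r, L5.g, L5.b, L5.p, L5.q}, fun x => by cases x <;> simp⟩

/-- is the label one of r,g,b? -/
def rgbB : L5 → Bool
  | L5.r | L5.g | L5.b => true
  | _ => false

/-- nonspoiled pair shapes -/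
def nsB : L5 → L5 → Bool
  | L5.r, L5.p | L5.g, L5.p | L5.g, L5.q | L5.b, L5.q
  | L5.p, L5.r | L5.p, L5.g | L5.q, L5.g | L5.q, L5.b => true
  | _, _ => false

/-- the matching at a gadget whose color is the first argument -/
def m2 : L5 → L5 → Option L5
  | L5.r, L5.g => some L5.p
  | L5.r, L5.b => some L5.q
  | L5.r, L5.p => some L5.g
  | L5.r, L5.q => some L5.b
  | L5.g, L5.r => some L5.p
  | L5.g, L5.b => some L5.q
  | L5.g, L5.p => some L5.r
  | L5.g, L5.q => some L5.b
  | L5.b, L5.r => some L5.p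
  | L5.b, L5.g => some L5.q
  | L5.b, L5.p => some L5.r
  | L5.b, L5.q => some L5.g
  | _, _ => none

def lab : Fin 3 → L5 := ![L5.r, L5.g, L5.b]

def toFin : L5 → Fin 3
  | L5.g => 1
  | L5.b => 2
  | _ => 0

lemma lab_rgb : ∀ i, rgbB (lab i) = true := by decide
lemma lab_inj : ∀ i j : Fin 3, lab i = lab j → i = j := by decide
lemma toFin_inj : ∀ a b, rgbB a = true → rgbB b = true → toFin a = toFin b → a = b := by decide
lemma m2_ns : ∀ a ε δ, m2 a ε = some δ → nsB ε δ = true := by decide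
lemma m2_inj : ∀ a ε ε' δ, m2 a ε = some δ → m2 a ε' = some δ → ε = ε' := by decide
lemma L1 : ∀ a ε δ, rgbB a = true → nsB ε δ = true →
    (m2 a ε).isSome = true ∨ ∃ ε', m2 a ε' = some δ := by decide
lemma L2 : ∀ a ε δ, rgbB a = true → rgbB ε = true → rgbB δ = true → ε ≠ δ →
    (m2 a ε).isSome = true ∨ ∃ ε', m2 a ε' = some δ := by decide
lemma L3 : ∀ a b ε, rgbB a = true → rgbB b = true → a ≠ b → rgbB ε = true →
    (m2 a ε).isSome = true ∨ ∃ ε', m2 b ε' = some ε := by decide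
lemma nsb_r : ∀ δ, nsB L5.r δ = true → δ = L5.p := by decide
lemma nsb_g : ∀ δ, nsB L5.g δ = true → δ = L5.p ∨ δ = L5.q := by decide
lemma nsb_b : ∀ δ, nsB L5.b δ = true → δ = L5.q := by decide
lemma nsb_r' : ∀ ε, nsB ε L5.r = true → ε = L5.p := by decide
lemma nsb_g' : ∀ ε, nsB ε L5.g = true → ε = L5.p ∨ ε = L5.q := by decide
lemma nsb_b' : ∀ ε, nsB ε L5.b = true → ε = L5.q := by decide

lemma rgb_iff (ε : L5) : ε ∈ ({L5.r, L5.g, L5.b} : Set L5) ↔ rgbB ε = true := by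
  cases ε <;> simp [rgbB]

lemma ns_mem' {U : Type*} {q : (U × L5) × U × L5} :
    q ∈ nonSpoiledPairs U ↔ q.2.1 = q.1.1 ∧ nsB q.1.2 q.2.2 = true := by
  obtain ⟨⟨a, ε⟩, c, δ⟩ := q
  dsimp only
  constructor
  · rintro ⟨u, h⟩
    rcases h with h|h|h|h|h|h|h|h <;>
      (simp only [Prod.mk.injEq] at h; obtain ⟨⟨rfl, rfl⟩, rfl, rfl⟩ := h; exact ⟨rfl, rfl⟩)
  · rintro ⟨rfl, hb⟩
    exact ⟨c, by cases ε <;> cases δ <;> simp_all [nsB]⟩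

lemma sp_mem' {U : Type*} {H : SimpleGraph U} {q : (U × L5) × U × L5} :
    q ∈ spoiledPairs H ↔
      (q.2.1 = q.1.1 ∧ rgbB q.1.2 = true ∧ rgbB q.2.2 = true ∧ q.1.2 ≠ q.2.2) ∨
      (H.Adj q.1.1 q.2.1 ∧ q.2.2 = q.1.2 ∧ rgbB q.1.2 = true) := by
  obtain ⟨⟨a, ε⟩, c, δ⟩ := q
  dsimp only
  constructor
  · rintro (⟨v, ε', δ', hε, hδ, hne, heq⟩ | ⟨v, u, ε', hε, hadj, heq⟩) <;>
      simp only [Prod.mk.injEq] at heq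
    · obtain ⟨⟨rfl, rfl⟩, rfl, rfl⟩ := heq
      exact Or.inl ⟨rfl, (rgb_iff _).mp hε, (rgb_iff _).mp hδ, hne⟩
    · obtain ⟨⟨rfl, rfl⟩, rfl, rfl⟩ := heq
      exact Or.inr ⟨hadj, rfl, (rgb_iff _).mp hε⟩
  · rintro (⟨rfl, h1, h2, h3⟩ | ⟨hadj, rfl, h1⟩)
    · exact Or.inl ⟨c, ε, δ, (rgb_iff _).mpr h1, (rgb_iff _).mpr h2, h3, rfl⟩
    · exact Or.inr ⟨a, c, δ, (rgb_iff _).mpr h1, hadj, rfl⟩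

end Stmt7

open Stmt7

/-- A finite undirected graph `H` is 3-colorable iff the instance `G_H` of the maximal
spoiled-free problem has the maximal spoiled-free property. -/
theorem stmt_7 {U : Type*} [Fintype U] (H : SimpleGraph U) :
    (∃ f : U → Fin 3, ∀ u v, H.Adj u v → f u ≠ f v) ↔
      MaxSpoiledFree (triS H) (triE H) := by
  constructor
  · rintro ⟨f, hf⟩
    refine ⟨{x | ∃ v ε δ, m2 (lab (f v)) ε = some δ ∧
        x = ((((v, ε), (v, δ)), false), (v, ε), (v, δ))}, ?_, ?_, ?_, ?_⟩
    · rintro x ⟨v, ε, δ, hm, rfl⟩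
      exact ⟨Or.inl ⟨rfl, ns_mem'.mpr ⟨rfl, m2_ns _ _ _ hm⟩⟩, rfl, rfl⟩
    · rintro x ⟨v, ε, δ, hm, rfl⟩ x' ⟨v', ε', δ', hm', rfl⟩ hag
      rcases hag with h | h | h
      · simp only [Prod.mk.injEq] at h
        obtain ⟨⟨⟨rfl, rfl⟩, -, rfl⟩, -⟩ := h
        rfl
      · simp only [Prod.mk.injEq] at h
        obtain ⟨rfl, rfl⟩ := h
        rw [hm'] at hm
        obtain rfl := Option.some.inj hm
        rfl
      · simp only [Prod.mk.injEq] at h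
        obtain ⟨rfl, rfl⟩ := h
        obtain rfl := m2_inj _ _ _ _ hm hm'
        rfl
    · intro T' hsub' hdisj' hsubT
      refine Set.Subset.antisymm ?_ hsubT
      intro x hx
      obtain ⟨hx1, hx2, hx3⟩ := hsub' hx
      have hy : ∃ y, (∃ v ε δ, m2 (lab (f v)) ε = some δ ∧
          y = ((((v, ε), (v, δ)), false), (v, ε), (v, δ))) ∧
          (y.2.1 = x.1.1.1 ∨ y.2.2 = x.1.1.2) := by
        rcases hx1 with ⟨-, hns⟩ | ⟨-, hsp⟩
        · rw [ns_mem'] at hns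
          obtain ⟨he, hb⟩ := hns
          rcases L1 (lab (f x.1.1.1.1)) x.1.1.1.2 x.1.1.2.2 (lab_rgb _) hb with h | ⟨ε', h⟩
          · obtain ⟨δ', hδ⟩ := Option.isSome_iff_exists.mp h
            exact ⟨_, ⟨x.1.1.1.1, x.1.1.1.2, δ', hδ, rfl⟩, Or.inl rfl⟩
          · refine ⟨_, ⟨x.1.1.1.1, ε', x.1.1.2.2, h, rfl⟩, Or.inr ?_⟩
            rw [← he]
        · rw [sp_mem'] at hsp
          rcases hsp with ⟨he, h1, h2, h3⟩ | ⟨hadj, he, h1⟩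
          · rcases L2 (lab (f x.1.1.1.1)) x.1.1.1.2 x.1.1.2.2 (lab_rgb _) h1 h2 h3 with h | ⟨ε', h⟩
            · obtain ⟨δ', hδ⟩ := Option.isSome_iff_exists.mp h
              exact ⟨_, ⟨x.1.1.1.1, x.1.1.1.2, δ', hδ, rfl⟩, Or.inl rfl⟩
            · refine ⟨_, ⟨x.1.1.1.1, ε', x.1.1.2.2, h, rfl⟩, Or.inr ?_⟩
              rw [← he]
          · have hne : lab (f x.1.1.1.1) ≠ lab (f x.1.1.2.1) :=
              fun hc => hf _ _ hadj (lab_inj _ _ hc)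
            rcases L3 _ _ x.1.1.1.2 (lab_rgb _) (lab_rgb _) hne h1 with h | ⟨ε', h⟩
            · obtain ⟨δ', hδ⟩ := Option.isSome_iff_exists.mp h
              exact ⟨_, ⟨x.1.1.1.1, x.1.1.1.2, δ', hδ, rfl⟩, Or.inl rfl⟩
            · refine ⟨_, ⟨x.1.1.2.1, ε', x.1.1.1.2, h, rfl⟩, Or.inr ?_⟩
              rw [← he]
      obtain ⟨y, hyT, hyc⟩ := hy
      have hyT' : y ∈ T' := hsubT hyT
      have hxy : x = y := by
        apply hdisj' x hx y hyT'
        rcases hyc with h | h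
        · exact Or.inr (Or.inl (by rw [hx2, h]))
        · exact Or.inr (Or.inr (by rw [hx3, h]))
      rw [hxy]; exact hyT
    · rintro x ⟨v, ε, δ, hm, rfl⟩ hmem
      exact Bool.false_ne_true hmem.2
  · rintro ⟨T, hsub, hdisj, hmax, hfree⟩
    have hflag : ∀ x ∈ T, x.1.2 = false := by
      intro x hx
      cases h : x.1.2
      · rfl
      · exact absurd ⟨(hsub hx).1, h⟩ (hfree x hx)
    have hT_ns : ∀ x ∈ T, x.1.1 ∈ nonSpoiledPairs U := by
      intro x hx
      rcases (hsub hx).1 with ⟨-, h⟩ | ⟨h, -⟩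
      · exact h
      · rw [hflag x hx] at h; cases h
    have hshape : ∀ x ∈ T, x.2.1.1 = x.2.2.1 ∧ nsB x.2.1.2 x.2.2.2 = true := by
      intro x hx
      obtain ⟨-, h2, h3⟩ := hsub hx
      have hns := ns_mem'.mp (hT_ns x hx)
      rw [h2, h3]
      exact ⟨hns.1.symm, hns.2⟩
    have comp : ∀ x ∈ T, ∀ v ε, x.2.1 = (v, ε) → x.2.2.1 = v ∧ nsB ε x.2.2.2 = true := by
      intro x hx v ε h
      obtain ⟨e1, e2⟩ := hshape x hx
      rw [h] at e1 e2
      exact ⟨e1.symm, e2⟩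
    have comp' : ∀ x ∈ T, ∀ v δ, x.2.2 = (v, δ) → x.2.1.1 = v ∧ nsB x.2.1.2 δ = true := by
      intro x hx v δ h
      obtain ⟨e1, e2⟩ := hshape x hx
      rw [h] at e1 e2
      exact ⟨e1, e2⟩
    have key : ∀ p : (U × L5) × U × L5, p ∈ spoiledPairs H →
        (∃ x ∈ T, x.2.1 = p.1) ∨ (∃ x ∈ T, x.2.2 = p.2) := by
      intro p hp
      by_contra hcon
      push_neg at hcon
      obtain ⟨h1, h2⟩ := hcon
      have htE : ((p, true), p.1, p.2) ∈ triE H := ⟨Or.inr ⟨rfl, hp⟩, rfl, rfl⟩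
      have htT : ((p, true), p.1, p.2) ∉ T := by
        intro hc
        simpa using hflag _ hc
      have hdisj2 : IsDisjTriangles (insert ((p, true), p.1, p.2) T) := by
        intro a ha b hb hag
        rcases Set.mem_insert_iff.mp ha with rfl | ha' <;>
          rcases Set.mem_insert_iff.mp hb with rfl | hb'
        · rfl
        · exfalso
          rcases hag with h | h | h
          · have h5 := hflag b hb'; rw [← h] at h5; simp at h5
          · exact h1 b hb' h.symm
          · exact h2 b hb' h.symm
        · exfalso
          rcases hag with h | h | h
          · have h5 := hflag a ha'; rw [h] at h5; simp at h5
          · exact h1 a ha' h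
          · exact h2 a ha' h
        · exact hdisj a ha' b hb' hag
      have heq := hmax _ (Set.insert_subset htE hsub) hdisj2 (Set.subset_insert _ _)
      exact htT (heq ▸ Set.mem_insert _ _)
    have hub2 : ∀ v : U, ∃ ε, rgbB ε = true ∧ ∀ x ∈ T, x.2.1 ≠ (v, ε) := by
      intro v
      by_contra hcon
      push_neg at hcon
      obtain ⟨xr, hxr, hr⟩ := hcon L5.r rfl
      obtain ⟨xg, hxg, hg⟩ := hcon L5.g rfl
      obtain ⟨xb, hxb, hb⟩ := hcon L5.b rfl
      obtain ⟨cr1, cr2⟩ := comp xr hxr v L5.r hr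
      obtain ⟨cg1, cg2⟩ := comp xg hxg v L5.g hg
      obtain ⟨cb1, cb2⟩ := comp xb hxb v L5.b hb
      rcases nsb_g _ cg2 with h | h
      · have e : xg.2.2 = xr.2.2 := by
          rw [Prod.ext_iff, cr1, nsb_r _ cr2]
          exact ⟨cg1, h⟩
        have e2 := hdisj xg hxg xr hxr (Or.inr (Or.inr e))
        rw [e2, hr] at hg
        simp at hg
      · have e : xg.2.2 = xb.2.2 := by
          rw [Prod.ext_iff, cb1, nsb_b _ cb2]
          exact ⟨cg1, h⟩
        have e2 := hdisj xg hxg xb hxb (Or.inr (Or.inr e))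
        rw [e2, hb] at hg
        simp at hg
    have hub3 : ∀ v : U, ∃ δ, rgbB δ = true ∧ ∀ x ∈ T, x.2.2 ≠ (v, δ) := by
      intro v
      by_contra hcon
      push_neg at hcon
      obtain ⟨xr, hxr, hr⟩ := hcon L5.r rfl
      obtain ⟨xg, hxg, hg⟩ := hcon L5.g rfl
      obtain ⟨xb, hxb, hb⟩ := hcon L5.b rfl
      obtain ⟨cr1, cr2⟩ := comp' xr hxr v L5.r hr
      obtain ⟨cg1, cg2⟩ := comp' xg hxg v L5.g hg
      obtain ⟨cb1, cb2⟩ := comp' xb hxb v L5.b hb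
      rcases nsb_g' _ cg2 with h | h
      · have e : xg.2.1 = xr.2.1 := by
          rw [Prod.ext_iff, cr1, nsb_r' _ cr2]
          exact ⟨cg1, h⟩
        have e2 := hdisj xg hxg xr hxr (Or.inr (Or.inl e))
        rw [e2, hr] at hg
        simp at hg
      · have e : xg.2.1 = xb.2.1 := by
          rw [Prod.ext_iff, cb1, nsb_b' _ cb2]
          exact ⟨cg1, h⟩
        have e2 := hdisj xg hxg xb hxb (Or.inr (Or.inl e))
        rw [e2, hb] at hg
        simp at hg
    have hboth : ∀ v : U, ∃ ε, rgbB ε = true ∧ (∀ x ∈ T, x.2.1 ≠ (v, ε)) ∧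
        (∀ x ∈ T, x.2.2 ≠ (v, ε)) := by
      intro v
      obtain ⟨ε, hε, hu2⟩ := hub2 v
      obtain ⟨δ, hδ, hu3⟩ := hub3 v
      have hed : ε = δ := by
        by_contra hne
        have hp : ((v, ε), (v, δ)) ∈ spoiledPairs H :=
          sp_mem'.mpr (Or.inl ⟨rfl, hε, hδ, hne⟩)
        rcases key _ hp with ⟨x, hx, h⟩ | ⟨x, hx, h⟩
        · exact hu2 x hx h
        · exact hu3 x hx h
      rw [← hed] at hu3
      exact ⟨ε, hε, hu2, hu3⟩
    choose g hg1 hg2 hg3 using hboth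
    refine ⟨fun v => toFin (g v), ?_⟩
    intro u v hadj heq
    have hgeq : g u = g v := toFin_inj _ _ (hg1 u) (hg1 v) heq
    have hp : ((u, g u), (v, g u)) ∈ spoiledPairs H :=
      sp_mem'.mpr (Or.inr ⟨hadj, rfl, hg1 u⟩)
    rcases key _ hp with ⟨x, hx, h⟩ | ⟨x, hx, h⟩
    · exact hg2 u x hx h
    · rw [hgeq] at h
      exact hg3 v x hx h
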